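/- Let u be an infinite word whose factor set is closed under reversal and F an injective stable cellular automaton of radius r. Then for all n, the palindromic complexity satisfies p^{al}_{F(u)}(n) = p^{al}_u(n + r − 1). -/
import Mathlib


/-- The window of length `n` of an infinite word `u` starting at position `i`. -/
def window {A : Type*} (u : ℕ → A) (i n : ℕ) : List A :=
  (List.range n).map (fun j => u (i + j))

/-- `w` is a (finite) factor of the infinite word `u`. -/
def IsFactor {A : Type*} (u : ℕ → A) (w : List A) : Prop :=
  ∃ i, w = window u i w.length

/-- The cellular automaton with local rule `f` of radius `r`, on finite words. -/
def caF {A B : Type*} (f : List A → B) (r : ℕ) (w : List A) : List B :=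
  (List.range (w.length + 1 - r)).map (fun i => f ((w.drop i).take r))

/-- The cellular automaton with local rule `f` of radius `r`, on infinite words. -/
def caFInf {A B : Type*} (f : List A → B) (r : ℕ) (u : ℕ → A) : ℕ → B :=
  fun i => f (window u i r)

/-- The set of factors of length `n` of `u`. -/
def factorsOfLen {A : Type*} (u : ℕ → A) (n : ℕ) : Set (List A) :=
  {w | w.length = n ∧ IsFactor u w}

/-- The factor complexity function. -/
noncomputable def complexity {A : Type*} (u : ℕ → A) (n : ℕ) : ℕ :=
  Nat.card (factorsOfLen u n)

/-- The factor set of `u` is closed under reversal. -/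
def ClosedUnderReversal {A : Type*} (u : ℕ → A) : Prop :=
  ∀ w : List A, IsFactor u w → IsFactor u w.reverse

/-- The palindromic complexity function: the number of distinct palindromic
factors of length `n` of `u`. -/
noncomputable def palComplexity {A : Type*} (u : ℕ → A) (n : ℕ) : ℕ :=
  Nat.card {w : List A | w.length = n ∧ IsFactor u w ∧ w.reverse = w}

lemma window_length {A : Type*} (u : ℕ → A) (i n : ℕ) : (window u i n).length = n := by
  simp [window]

lemma window_drop_take {A : Type*} (u : ℕ → A) {i n j r : ℕ} (h : j + r ≤ n) :
    ((window u i n).drop j).take r = window u (i + j) r := by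
  apply List.ext_getElem
  · simp [window]; omega
  · intro k h1 h2
    simp only [List.getElem_take, List.getElem_drop, window, List.getElem_map,
      List.getElem_range]
    ring_nf

lemma caF_window {A B : Type*} (f : List A → B) {r : ℕ} (hr : 1 ≤ r) (u : ℕ → A)
    (i n : ℕ) : caF f r (window u i (n + r - 1)) = window (caFInf f r u) i n := by
  apply List.ext_getElem
  · simp [caF, window]; omega
  · intro k h1 h2
    have hk : k < n := by simpa [window_length] using h2
    rw [show (window (caFInf f r u) i n)[k] = caFInf f r u (i + k) from by simp [window]]
    simp only [caF, window_length, List.getElem_map, List.getElem_range]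
    rw [window_drop_take u (by omega)]
    rfl

lemma caF_reverse {A B : Type*} (f : List A → B) {r : ℕ}
    (hst : ∀ w : List A, w.length = r → f w.reverse = f w) (w : List A) :
    caF f r w.reverse = (caF f r w).reverse := by
  apply List.ext_getElem
  · simp [caF]
  · intro k h1 h2
    have hlen : k < w.length + 1 - r := by simpa [caF] using h1
    simp only [caF, List.length_reverse, List.getElem_map, List.getElem_range,
      List.getElem_reverse, List.length_map, List.length_range]
    have key : (w.reverse.drop k).take r = ((w.drop (w.length + 1 - r - 1 - k)).take r).reverse := by
      apply List.ext_getElem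
      · simp; omega
      · intro m hm1 hm2
        simp only [List.getElem_take, List.getElem_drop, List.getElem_reverse,
          List.length_take, List.length_drop]
        congr 1
        simp at hm1 hm2
        omega
    rw [key, hst]
    simp; omega

lemma isFactor_window {A : Type*} (u : ℕ → A) (i n : ℕ) : IsFactor u (window u i n) :=
  ⟨i, by rw [window_length]⟩

theorem ca_palComplexity {A B : Type*} [Fintype A] [Fintype B]
    (f : List A → B) (r : ℕ) (hr : 1 ≤ r)
    (hst : ∀ w : List A, w.length = r → f w.reverse = f w)
    (u : ℕ → A) (hcl : ClosedUnderReversal u)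
    (hinj : ∀ w₁ w₂ : List A, IsFactor u w₁ → IsFactor u w₂ →
      w₁.length = w₂.length → caF f r w₁ = caF f r w₂ → w₁ = w₂) :
    ∀ n : ℕ, palComplexity (caFInf f r u) n = palComplexity u (n + r - 1) := by
  intro n
  set L := n + r - 1 with hL
  have hcaFlen : ∀ w : List A, w.length = L → (caF f r w).length = n := by
    intro w hw; simp [caF, hw]; omega
  -- the map
  have hmem : ∀ w : List A, w.length = L → IsFactor u w → w.reverse = w →
      (caF f r w) ∈ {w : List B | w.length = n ∧ IsFactor (caFInf f r u) w ∧ w.reverse = w} := by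
    rintro w hlen ⟨i, hi⟩ hpal
    rw [hlen] at hi
    refine ⟨hcaFlen w hlen, ⟨i, ?_⟩, ?_⟩
    · rw [hcaFlen w hlen, hi, caF_window f hr]
    · rw [← caF_reverse f hst, hpal]
  set g : {w : List A | w.length = L ∧ IsFactor u w ∧ w.reverse = w} →
      {w : List B | w.length = n ∧ IsFactor (caFInf f r u) w ∧ w.reverse = w} :=
    fun w => ⟨caF f r (w : List A), hmem w w.2.1 w.2.2.1 w.2.2.2⟩ with hg
  have hbij : Function.Bijective g := by
    constructor
    · rintro ⟨w₁, h₁, hf₁, hp₁⟩ ⟨w₂, h₂, hf₂, hp₂⟩ hgw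
      simp only [hg, Subtype.mk.injEq] at hgw ⊢
      exact hinj w₁ w₂ hf₁ hf₂ (h₁.trans h₂.symm) hgw
    · rintro ⟨v, hvlen, ⟨i, hi⟩, hvpal⟩
      rw [hvlen] at hi
      set w := window u i L with hw
      have hwlen : w.length = L := window_length u i L
      have hvw : v = caF f r w := by rw [hi, hw, ← caF_window f hr]
      have hwf : IsFactor u w := isFactor_window u i L
      have hwpal : w.reverse = w := by
        refine hinj w.reverse w (hcl w hwf) hwf (by simp) ?_
        rw [caF_reverse f hst, ← hvw, hvpal, hvw]
      exact ⟨⟨w, hwlen, hwf, hwpal⟩, by simp only [hg, Subtype.mk.injEq]; exact hvw.symm⟩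
  unfold palComplexity
  exact (Nat.card_congr (Equiv.ofBijective g hbij)).symm
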